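/- arXiv:1801.03494 — 2 statements merged into one kernel-verified Lean document; each statement's English description precedes it below -/
import Mathlib

section
/- Let T(n) = R·n^N + (n+1)^N, T₂(n) = ⌈(R·T(n) + (K−1)(n+1)^N)/(K−1)⌉, T₁(n) = T(n) − T₂(n), and block length B(n) = R·T(n) + K(n+1)^N. Then lim_{n→∞} K·T₁(n)/B(n) = K·R·(K−R−2)/((K−1)(R(R+1)+K)). -/
/-!
Divide numerator and denominator by `n ^ N`: with `u = ((n + 1) / n) ^ N → 1`, `T / n ^ N = R + u`
and `B / n ^ N = R (R + u) + K u`, while rounding up in `T₂` perturbs the numerator by less than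
`1 / n ^ N → 0`. The limit is the resulting rational function of `u` evaluated at `u = 1`.
-/

open Filter Topology

theorem tendsto_add_one_pow_div_pow_atTop (N : ℕ) :
    Tendsto (fun n : ℕ => ((n : ℝ) + 1) ^ N / (n : ℝ) ^ N) atTop (𝓝 1) := by
  have h := (tendsto_add_mul_div_add_mul_atTop_nhds (1 : ℝ) 0 1 one_ne_zero).pow N
  simpa only [one_mul, zero_add, add_comm (1 : ℝ), div_one, one_pow, div_pow] using h

theorem tendsto_ceil_sub_div_atTop {ι : Type*} {l : Filter ι} (x : ι → ℝ) {g : ι → ℝ}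
    (hg : Tendsto g l atTop) :
    Tendsto (fun i => ((⌈x i⌉ : ℝ) - x i) / g i) l (𝓝 0) := by
  refine squeeze_zero' ?_ ?_ hg.inv_tendsto_atTop
  · filter_upwards [hg.eventually_gt_atTop 0] with i hi
    exact div_nonneg (sub_nonneg.2 (Int.le_ceil _)) hi.le
  · filter_upwards [hg.eventually_gt_atTop 0] with i hi
    rw [div_eq_mul_inv]
    exact mul_le_of_le_one_left (inv_nonneg.2 hi.le)
      (by linarith [Int.ceil_lt_add_one (x i)])

/-- In the application `m = n ^ N`, `a = (n + 1) ^ N` and `c = T₂`. -/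
theorem sdof_ratio_eq_rescaled {K R m a : ℝ} (c : ℝ) (hK : K - 1 ≠ 0) (hm : m ≠ 0)
    (hB : R * (R * m + a) + K * a ≠ 0) :
    K * (R * m + a - c) / (R * (R * m + a) + K * a) =
      K * ((K - 1 - R) / (K - 1) * (R + a / m) - a / m
          - (c - (R * (R * m + a) + (K - 1) * a) / (K - 1)) / m) /
        (R * (R + a / m) + K * (a / m)) := by
  field_simp
  ring

theorem sdof_cm_limit_general (K R N : ℕ) (hK : 3 ≤ K) (hN : 1 ≤ N) :
    Tendsto
      (fun n : ℕ =>
        let T : ℝ := R * (n : ℝ) ^ N + ((n : ℝ) + 1) ^ N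
        let T₂ : ℝ := (⌈((R : ℝ) * T + ((K : ℝ) - 1) * ((n : ℝ) + 1) ^ N) / ((K : ℝ) - 1)⌉ : ℤ)
        let T₁ : ℝ := T - T₂
        let B : ℝ := (R : ℝ) * T + (K : ℝ) * ((n : ℝ) + 1) ^ N
        (K : ℝ) * T₁ / B)
      atTop
      (nhds ((K : ℝ) * R * ((K : ℝ) - R - 2) /
        (((K : ℝ) - 1) * ((R : ℝ) * (R + 1) + K)))) := by
  have hK3 : (3 : ℝ) ≤ K := by exact_mod_cast hK
  have hK1 : (K : ℝ) - 1 ≠ 0 := by linarith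
  have hpow : Tendsto (fun n : ℕ => (n : ℝ) ^ N) atTop atTop :=
    (tendsto_pow_atTop (by omega)).comp tendsto_natCast_atTop_atTop
  set u : ℕ → ℝ := fun n => ((n : ℝ) + 1) ^ N / (n : ℝ) ^ N
  set y : ℕ → ℝ := fun n => ((R : ℝ) * (R * (n : ℝ) ^ N + ((n : ℝ) + 1) ^ N)
    + ((K : ℝ) - 1) * ((n : ℝ) + 1) ^ N) / ((K : ℝ) - 1)
  have hu : Tendsto u atTop (𝓝 1) := tendsto_add_one_pow_div_pow_atTop N
  have he := tendsto_ceil_sub_div_atTop y hpow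
  have hlim : Tendsto (fun n => (K : ℝ) * (((K : ℝ) - 1 - R) / ((K : ℝ) - 1) * (R + u n) - u n
      - (((⌈y n⌉ : ℤ) : ℝ) - y n) / (n : ℝ) ^ N) / (R * (R + u n) + K * u n)) atTop
      (𝓝 ((K : ℝ) * (((K : ℝ) - 1 - R) / ((K : ℝ) - 1) * (R + 1) - 1 - 0)
        / (R * (R + 1) + K * 1))) :=
    ((((hu.const_add _).const_mul _).sub hu).sub he).const_mul _ |>.div
      (((hu.const_add _).const_mul _).add (hu.const_mul _)) (by positivity)
  convert hlim.congr' ?_ using 2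
  · field_simp
    ring
  · filter_upwards [eventually_gt_atTop 0] with n hn
    exact (sdof_ratio_eq_rescaled _ hK1 (by positivity) (by positivity)).symm

/-- With `T(n) = R·n^N + (n+1)^N`, `T₂(n) = ⌈(R·T(n) + (K−1)(n+1)^N)/(K−1)⌉`,
`T₁(n) = T(n) − T₂(n)` and block length `B(n) = R·T(n) + K·(n+1)^N`, we have
`lim_{n→∞} K·T₁(n)/B(n) = K·R·(K−R−2)/((K−1)(R(R+1)+K))`. -/
theorem sdof_cm_limit (K R N : ℕ) (hK : 3 ≤ K) (hR : 1 ≤ R) (hN : 1 ≤ N)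
    (hKR : R + 2 < K) :
    Tendsto
      (fun n : ℕ =>
        let T : ℝ := R * (n : ℝ) ^ N + ((n : ℝ) + 1) ^ N
        let T₂ : ℝ := (⌈((R : ℝ) * T + ((K : ℝ) - 1) * ((n : ℝ) + 1) ^ N) / ((K : ℝ) - 1)⌉ : ℤ)
        let T₁ : ℝ := T - T₂
        let B : ℝ := (R : ℝ) * T + (K : ℝ) * ((n : ℝ) + 1) ^ N
        (K : ℝ) * T₁ / B)
      atTop
      (nhds ((K : ℝ) * R * ((K : ℝ) - R - 2) /
        (((K : ℝ) - 1) * ((R : ℝ) * (R + 1) + K)))) :=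
  sdof_cm_limit_general K R N hK hN
end

section
/- Let T(n) = R·n^N + (n+1)^N, T₂(n) = ⌈(R·T(n) + K(n+1)^N)/K⌉, T₁(n) = T(n) − T₂(n), and B(n) = R·T(n) + K(n+1)^N. Then lim_{n→∞} K·T₁(n)/B(n) = R(K−R−1)/(R(R+1)+K). -/
/-!
Since `(n / (n + 1)) ^ N → 1`, dividing by `(n + 1) ^ N` gives `T / B → (R + 1) / (R (R + 1) + K)`.
Rounding up moves `K · T₂` away from `B` by less than `K`, and `B → ∞`, so `K · T₂ / B → 1`.
Hence `K · T₁ / B → K (R + 1) / (R (R + 1) + K) - 1`, which is the claimed limit.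
-/

open Filter Topology

section CeilDiv

variable {𝕜 : Type*} [Field 𝕜] [LinearOrder 𝕜] [IsStrictOrderedRing 𝕜] [FloorRing 𝕜]

theorem le_mul_ceil_div {c : 𝕜} (hc : 0 < c) (x : 𝕜) : x ≤ c * ⌈x / c⌉ :=
  (div_le_iff₀' hc).1 (Int.le_ceil _)

theorem mul_ceil_div_lt_add {c : 𝕜} (hc : 0 < c) (x : 𝕜) : c * ⌈x / c⌉ < x + c :=
  calc c * ⌈x / c⌉ < c * (x / c + 1) := mul_lt_mul_of_pos_left (Int.ceil_lt_add_one _) hc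
    _ = x + c := by rw [mul_add, mul_div_cancel₀ _ hc.ne', mul_one]

end CeilDiv

theorem tendsto_mul_ceil_div_div_self {ι : Type*} {l : Filter ι} {B : ι → ℝ} {c : ℝ}
    (hc : 0 < c) (hB : Tendsto B l atTop) :
    Tendsto (fun i => c * ⌈B i / c⌉ / B i) l (𝓝 1) := by
  have hupper : Tendsto (fun i => 1 + c / B i) l (𝓝 1) := by
    simpa using tendsto_const_nhds.add (tendsto_const_nhds.div_atTop hB)
  refine tendsto_of_tendsto_of_tendsto_of_le_of_le' tendsto_const_nhds hupper ?_ ?_ <;>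
    filter_upwards [hB.eventually_gt_atTop 0] with i hi
  · rw [le_div_iff₀ hi, one_mul]
    exact le_mul_ceil_div hc _
  · rw [div_le_iff₀ hi, add_mul, one_mul, div_mul_cancel₀ _ hi.ne']
    exact (mul_ceil_div_lt_add hc _).le

theorem tendsto_mul_pow_add_succ_pow_div_succ_pow (a : ℝ) (N : ℕ) :
    Tendsto (fun n : ℕ => (a * (n : ℝ) ^ N + ((n : ℝ) + 1) ^ N) / ((n : ℝ) + 1) ^ N) atTop
      (𝓝 (a + 1)) := by
  have h := ((tendsto_natCast_div_add_atTop (1 : ℝ)).pow N).const_mul a |>.add_const 1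
  rw [one_pow, mul_one] at h
  refine h.congr fun n => ?_
  have : ((n : ℝ) + 1) ^ N ≠ 0 := by positivity
  rw [add_div, mul_div_assoc, div_self this, div_pow]

theorem tendsto_const_mul_succ_pow_atTop {c : ℝ} (hc : 0 < c) {N : ℕ} (hN : N ≠ 0) :
    Tendsto (fun n : ℕ => c * ((n : ℝ) + 1) ^ N) atTop atTop :=
  ((tendsto_pow_atTop hN).comp
    (tendsto_atTop_add_const_right _ 1 tendsto_natCast_atTop_atTop)).const_mul_atTop hc

theorem sdof_ee_limit_general (K R N : ℕ) (hK : 2 ≤ K) (hN : 1 ≤ N) :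
    Tendsto
      (fun n : ℕ =>
        let T : ℝ := R * (n : ℝ) ^ N + ((n : ℝ) + 1) ^ N
        let T₂ : ℝ := (⌈((R : ℝ) * T + (K : ℝ) * ((n : ℝ) + 1) ^ N) / (K : ℝ)⌉ : ℤ)
        let T₁ : ℝ := T - T₂
        let B : ℝ := (R : ℝ) * T + (K : ℝ) * ((n : ℝ) + 1) ^ N
        (K : ℝ) * T₁ / B)
      atTop
      (nhds ((R : ℝ) * ((K : ℝ) - R - 1) / ((R : ℝ) * (R + 1) + K))) := by
  have hK0 : (0 : ℝ) < K := Nat.cast_pos.2 (by omega)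
  set v : ℕ → ℝ := fun n => ((n : ℝ) + 1) ^ N
  set T : ℕ → ℝ := fun n => R * (n : ℝ) ^ N + v n
  set B : ℕ → ℝ := fun n => R * T n + K * v n
  have hv : ∀ n, 0 < v n := fun n => by positivity
  have hTv : Tendsto (fun n => T n / v n) atTop (𝓝 (R + 1)) :=
    tendsto_mul_pow_add_succ_pow_div_succ_pow R N
  have hTB : Tendsto (fun n => T n / B n) atTop (𝓝 ((R + 1) / (R * (R + 1) + K))) := by
    have hBv : Tendsto (fun n => B n / v n) atTop (𝓝 (R * (R + 1) + K)) :=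
      ((hTv.const_mul (R : ℝ)).add_const (K : ℝ)).congr fun n => by
        simp only [B]
        rw [add_div (_ * T n), mul_div_assoc, mul_div_cancel_right₀ _ (hv n).ne']
    exact (hTv.div hBv (by positivity)).congr fun n => div_div_div_cancel_right₀ (hv n).ne' _ _
  have hB : Tendsto B atTop atTop :=
    tendsto_atTop_mono (fun n => le_add_of_nonneg_left (by positivity))
      (tendsto_const_mul_succ_pow_atTop hK0 (N := N) (by omega))
  have hlim := (hTB.const_mul (K : ℝ)).sub (tendsto_mul_ceil_div_div_self hK0 hB)
  convert hlim using 1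
  · funext n
    simp only [T, B, v]
    rw [mul_sub, sub_div, mul_div_assoc]
  · congr 1
    field_simp
    ring

/-- With `T(n) = R·n^N + (n+1)^N`, `T₂(n) = ⌈(R·T(n) + K(n+1)^N)/K⌉`,
`T₁(n) = T(n) − T₂(n)` and `B(n) = R·T(n) + K·(n+1)^N`, we have
`lim_{n→∞} K·T₁(n)/B(n) = R(K−R−1)/(R(R+1)+K)`. -/
theorem sdof_ee_limit (K R N : ℕ) (hK : 2 ≤ K) (hR : 1 ≤ R) (hN : 1 ≤ N)
    (hKR : R + 1 < K) :
    Tendsto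
      (fun n : ℕ =>
        let T : ℝ := R * (n : ℝ) ^ N + ((n : ℝ) + 1) ^ N
        let T₂ : ℝ := (⌈((R : ℝ) * T + (K : ℝ) * ((n : ℝ) + 1) ^ N) / (K : ℝ)⌉ : ℤ)
        let T₁ : ℝ := T - T₂
        let B : ℝ := (R : ℝ) * T + (K : ℝ) * ((n : ℝ) + 1) ^ N
        (K : ℝ) * T₁ / B)
      atTop
      (nhds ((R : ℝ) * ((K : ℝ) - R - 1) / ((R : ℝ) * (R + 1) + K))) :=
  sdof_ee_limit_general K R N hK hN
end
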